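/- As formal power series over ℚ, U₀(q) = U₋(q) − (1/2)·{q}_∞, where U₀(q) = (1/2) ∑_{m=0}^{∞} (−1)^{z(m)} q^m. -/

import Mathlib

/-- The Mahler factorial `{q}_n = ∏_{j=0}^{n-1} (1 - q^{2^j})` as a power series over `ℚ`. -/
noncomputable def mahlerFacPS (n : ℕ) : PowerSeries ℚ :=
  ∏ j ∈ Finset.range n, (1 - PowerSeries.X ^ 2 ^ j)

/-- `{q}_∞ = ∏_{j=0}^∞ (1 - q^{2^j})` as a formal power series over `ℚ`: the infinite
product converges coefficientwise, its `n`-th coefficient being that of any partial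
product `{q}_N` with `2^N > n`, e.g. `N = n + 1`. -/
noncomputable def mahlerFacInf : PowerSeries ℚ :=
  PowerSeries.mk fun n => PowerSeries.coeff n (mahlerFacPS (n + 1))

/-- `U₋(q) = 1 - ∑_{i=0}^∞ q^{2^{2i+1}} {q}_{2i+1}` as a formal power series over `ℚ`;
each coefficient receives contributions from only finitely many summands. -/
noncomputable def Uminus : PowerSeries ℚ :=
  1 - PowerSeries.mk fun n =>
    ∑ i ∈ Finset.range (n + 1),
      PowerSeries.coeff n (PowerSeries.X ^ 2 ^ (2 * i + 1) * mahlerFacPS (2 * i + 1))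

/-- `z m` is the number of zero digits among the (nonleading) binary digits of `m`,
with `z 0 = 0`. -/
def zeroDigits (m : ℕ) : ℕ := (Nat.digits 2 m).count 0

/-- `U₀(q) = (1/2) ∑_{m=0}^∞ (-1)^{z(m)} q^m` as a formal power series over `ℚ`. -/
noncomputable def U0PS : PowerSeries ℚ :=
  PowerSeries.mk fun m => (1 / 2 : ℚ) * (-1) ^ zeroDigits m

/-! Expanding the product `{q}_n` picks, for each `k < 2^n`, the factors `-q^{2^j}` indexed by the
binary digits `1` of `k`, so the coefficient of `q^k` in `{q}_n` is `(-1)^{s(k)}`, `s(k)` being the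
number of ones. Hence `q^{2^{2i+1}} {q}_{2i+1}` contributes `-(-1)^{s(m)}` exactly to the `m` with
`2i+2` binary digits, and the `m`-th coefficient of `U₋` is `(-1)^{s(m)}` if `m` has an even
number of digits and `0` otherwise. Since `z(m) + s(m)` is the number of digits of `m`, this is
the `m`-th coefficient of `U₀ + ½ {q}_∞`. -/

open PowerSeries

def onesCount (m : ℕ) : ℕ := (Nat.digits 2 m).count 1

lemma List.count_zero_add_count_one {l : List ℕ} (hl : ∀ x ∈ l, x < 2) :
    l.count 0 + l.count 1 = l.length := by
  induction l with
  | nil => rfl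
  | cons a l ih =>
    have ha : a < 2 := hl a List.mem_cons_self
    have := ih fun x hx => hl x (List.mem_cons_of_mem a hx)
    interval_cases a <;> simp <;> omega

lemma zeroDigits_add_onesCount (m : ℕ) :
    zeroDigits m + onesCount m = (Nat.digits 2 m).length :=
  List.count_zero_add_count_one fun _ => Nat.digits_lt_base one_lt_two

lemma onesCount_add_two_pow {n k : ℕ} (hk : k < 2 ^ n) :
    onesCount (k + 2 ^ n) = onesCount k + 1 := by
  have hlen : (Nat.digits 2 k).length ≤ n := (Nat.digits_length_le_iff one_lt_two k).2 hk
  -- the binary digits of `k + 2^n` are those of `k`, padded with zeros to length `n`, then a `1`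
  have h := Nat.digits_append_zeroes_append_digits (b := 2) (k := n - (Nat.digits 2 k).length)
    (m := 1) (n := k) one_lt_two one_pos
  rw [Nat.add_sub_cancel' hlen, mul_one] at h
  rw [onesCount, onesCount, ← h]
  simp [List.count_replicate]

lemma length_digits_two_eq_iff {n m : ℕ} :
    (Nat.digits 2 m).length = n + 1 ↔ 2 ^ n ≤ m ∧ m < 2 ^ (n + 1) := by
  rw [← Nat.lt_digits_length_iff one_lt_two, ← Nat.digits_length_le_iff one_lt_two]
  omega

lemma mahlerFacPS_eq_sum (n : ℕ) :
    mahlerFacPS n = ∑ k ∈ Finset.range (2 ^ n), monomial k ((-1 : ℚ) ^ onesCount k) := by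
  induction n with
  | zero => simp [mahlerFacPS, onesCount, monomial_zero_eq_C]
  | succ n ih =>
    have hhigh : ∀ k ∈ Finset.range (2 ^ n),
        monomial (2 ^ n + k) ((-1 : ℚ) ^ onesCount (2 ^ n + k))
          = -(monomial k ((-1 : ℚ) ^ onesCount k) * monomial (2 ^ n) 1) := fun k hk => by
      rw [add_comm, onesCount_add_two_pow (Finset.mem_range.1 hk), monomial_mul_monomial,
        ← map_neg, pow_succ]
      ring_nf
    rw [mahlerFacPS, Finset.prod_range_succ, ← mahlerFacPS, ih, pow_succ, mul_two,
      Finset.sum_range_add, Finset.sum_congr rfl hhigh, Finset.sum_neg_distrib, ← Finset.sum_mul,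
      X_pow_eq]
    ring

lemma coeff_mahlerFacPS (n k : ℕ) :
    coeff k (mahlerFacPS n) = if k < 2 ^ n then (-1 : ℚ) ^ onesCount k else 0 := by
  simp [mahlerFacPS_eq_sum, coeff_monomial]

lemma coeff_mahlerFacInf (m : ℕ) : coeff m mahlerFacInf = (-1 : ℚ) ^ onesCount m := by
  rw [mahlerFacInf, coeff_mk, coeff_mahlerFacPS,
    if_pos (m.lt_two_pow_self.trans (Nat.pow_lt_pow_succ one_lt_two))]

lemma coeff_X_pow_two_pow_mul_mahlerFacPS (n m : ℕ) :
    coeff m (X ^ 2 ^ n * mahlerFacPS n)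
      = if (Nat.digits 2 m).length = n + 1 then -(-1 : ℚ) ^ onesCount m else 0 := by
  simp only [coeff_X_pow_mul', length_digits_two_eq_iff]
  by_cases hlow : 2 ^ n ≤ m
  · obtain ⟨k, rfl⟩ := Nat.exists_eq_add_of_le' hlow
    by_cases hk : k < 2 ^ n
    · rw [if_pos hlow, Nat.add_sub_cancel, coeff_mahlerFacPS, if_pos hk,
        if_pos ⟨hlow, by rw [pow_succ]; omega⟩, onesCount_add_two_pow hk, pow_succ]
      ring
    · rw [if_pos hlow, Nat.add_sub_cancel, coeff_mahlerFacPS, if_neg hk,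
        if_neg fun h => by rw [pow_succ] at h; omega]
  · rw [if_neg hlow, if_neg fun h => hlow h.1]

lemma coeff_Uminus (m : ℕ) :
    coeff m Uminus = if Even (Nat.digits 2 m).length then (-1 : ℚ) ^ onesCount m else 0 := by
  simp only [Uminus, map_sub, coeff_one, coeff_mk, coeff_X_pow_two_pow_mul_mahlerFacPS]
  have hm : m = 0 ↔ (Nat.digits 2 m).length = 0 := by
    rw [List.length_eq_zero_iff, Nat.digits_eq_nil_iff_eq_zero]
  have hlen : (Nat.digits 2 m).length ≤ m :=
    (Nat.digits_length_le_iff one_lt_two m).2 m.lt_two_pow_self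
  rcases Nat.even_or_odd (Nat.digits 2 m).length with ⟨k, hk⟩ | ⟨k, hk⟩
  · rcases k.eq_zero_or_pos with rfl | hk0
    · obtain rfl : m = 0 := hm.2 hk
      simp [onesCount]
    · rw [Finset.sum_eq_single_of_mem (k - 1) (Finset.mem_range.2 (by omega))
        fun i _ hi => if_neg (by omega), if_neg (by omega), if_pos (by omega),
        if_pos ⟨k, hk⟩]
      ring
  · rw [Finset.sum_eq_zero fun i _ => if_neg (by omega), if_neg (by omega),
      if_neg (Nat.not_even_iff_odd.2 ⟨k, hk⟩)]
    ring

lemma neg_one_pow_zeroDigits (m : ℕ) :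
    (-1 : ℚ) ^ zeroDigits m = (-1) ^ (Nat.digits 2 m).length * (-1) ^ onesCount m := by
  rw [← zeroDigits_add_onesCount, pow_add, mul_assoc, ← pow_add, ← two_mul, pow_mul]
  simp

theorem stmt11 : U0PS = Uminus - (1 / 2 : ℚ) • mahlerFacInf := by
  ext m
  rw [U0PS, coeff_mk, map_sub, coeff_smul, coeff_Uminus, coeff_mahlerFacInf, smul_eq_mul,
    neg_one_pow_zeroDigits]
  rcases Nat.even_or_odd (Nat.digits 2 m).length with h | h
  · rw [if_pos h, h.neg_one_pow]; ring
  · rw [if_neg (Nat.not_even_iff_odd.2 h), h.neg_one_pow]; ring
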